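/- arXiv:2109.15133 — 3 statements merged into one kernel-verified Lean document; each statement's English description precedes it below -/
import Mathlib

section
/- Let F : ℝ^d → ℝ^d be C¹, f ∈ L²(0,T;ℝ^d), g ∈ ℝ^d, and let y_*^h be a minimizer of J(·;F,f,g) over a piecewise linear finite element space X^h. Let w_*[y_*^h](t) = g + ∫₀ᵗ (F(y_*^h(s)) + f(s)) ds and define Γ(t;v^h) = ∫₀ᵗ DF(y_*^h(s)) v^h(s) ds for t ∈ [0,T]. Then the orthogonality identity ⟨y_*^h − w_*[y_*^h], v^h − Γ(·;v^h)⟩_X = 0 holds for every v^h ∈ X^h. -/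
open MeasureTheory Set
open scoped RealInnerProductSpace

noncomputable section

/-- `ℝ^d`. -/
abbrev Euc (d : ℕ) := EuclideanSpace ℝ (Fin d)

/-- `(u, u')` represents an element of `X = H¹(0,T;ℝ^d)`: `u` is absolutely continuous
(equal to the integral of its a.e. derivative `u'`) and `u' ∈ L²(0,T;ℝ^d)`. -/
def MemX {d : ℕ} (T : ℝ) (u u' : ℝ → Euc d) : Prop :=
  MemLp u' 2 (volume.restrict (Icc (0:ℝ) T)) ∧
  ∀ t ∈ Icc (0:ℝ) T, u t = u 0 + ∫ s in (0:ℝ)..t, u' s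

/-- The inner product `⟨·,·⟩_X` on `X`. -/
def innerX {d : ℕ} (T : ℝ) (u u' v v' : ℝ → Euc d) : ℝ :=
  (∫ t in (0:ℝ)..T, ⟪u' t, v' t⟫) + ⟪u 0, v 0⟫

/-- The energy norm `‖·‖_X` on `X`. -/
def normX {d : ℕ} (T : ℝ) (u u' : ℝ → Euc d) : ℝ :=
  Real.sqrt (innerX T u u' u u')

/-- The `L²(0,T;ℝ^d)` norm. -/
def L2norm {d : ℕ} (T : ℝ) (w : ℝ → Euc d) : ℝ :=
  Real.sqrt (∫ t in (0:ℝ)..T, ‖w t‖ ^ 2)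

/-- The least-squares objective `J(y; F, f, g)`. -/
def Jfun {d : ℕ} (T : ℝ) (F : Euc d → Euc d) (f : ℝ → Euc d) (g : Euc d)
    (y y' : ℝ → Euc d) : ℝ :=
  (1/2) * (∫ t in (0:ℝ)..T, ‖y' t - F (y t) - f t‖ ^ 2) + (1/2) * ‖y 0 - g‖ ^ 2

/-- A partition `0 = τ₀ < τ₁ < ⋯ < τ_N = T` of `[0,T]`. -/
structure TimePartition (T : ℝ) where
  N : ℕ
  τ : ℕ → ℝ
  hN : 0 < N
  left : τ 0 = 0
  right : τ N = T
  mono : ∀ i < N, τ i < τ (i + 1)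

/-- The mesh size `h = max_i (τ_{i+1} - τ_i)` of a partition. -/
def TimePartition.mesh {T : ℝ} (P : TimePartition T) : ℝ :=
  (Finset.range P.N).sup' (Finset.nonempty_range_iff.mpr P.hN.ne') fun i => P.τ (i + 1) - P.τ i

/-- `v` is (on `[0,T]`) piecewise affine w.r.t. the partition `P`,
i.e. `v` belongs to the piecewise linear finite element space `X^h`. -/
def PWLinear {d : ℕ} {T : ℝ} (P : TimePartition T) (v : ℝ → Euc d) : Prop :=
  ∀ i < P.N, ∃ a b : Euc d, ∀ t ∈ Icc (P.τ i) (P.τ (i + 1)), v t = a + t • b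

/-- `(p, p')` is the orthogonal projection `Π_h (u,u')` of `(u, u') ∈ X` onto the piecewise
linear finite element space `X^h` attached to the partition `P`. -/
def IsProjX {d : ℕ} {T : ℝ} (P : TimePartition T) (u u' p p' : ℝ → Euc d) : Prop :=
  MemX T p p' ∧ PWLinear P p ∧
  ∀ v v' : ℝ → Euc d, MemX T v v' → PWLinear P v →
    innerX T (fun t => u t - p t) (fun t => u' t - p' t) v v' = 0

/-- `(y, y')` is a strong solution of the IVP `y' = F(y) + f(t)`, `y(0) = g`. -/
def IsStrongSol {d : ℕ} (T : ℝ) (F : Euc d → Euc d) (f : ℝ → Euc d) (g : Euc d)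
    (y y' : ℝ → Euc d) : Prop :=
  MemX T y y' ∧ y 0 = g ∧ ∀ᵐ t ∂(volume.restrict (Ioc (0:ℝ) T)), y' t = F (y t) + f t

/-- `(y, y')` is an lsfem solution: a global minimizer of `J(·;F,f,g)` over `X^h`. -/
def IsLSFEMSol {d : ℕ} (T : ℝ) (F : Euc d → Euc d) (f : ℝ → Euc d) (g : Euc d)
    (P : TimePartition T) (y y' : ℝ → Euc d) : Prop :=
  MemX T y y' ∧ PWLinear P y ∧
  ∀ z z' : ℝ → Euc d, MemX T z z' → PWLinear P z →
    Jfun T F f g y y' ≤ Jfun T F f g z z'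

/-- `c` is the smallest constant with `max_{t∈[0,T]} ‖u(t)‖ ≤ c ‖u‖_X` for all `u ∈ X`. -/
def IsEmbC (d : ℕ) (T : ℝ) (c : ℝ) : Prop :=
  IsLeast {a : ℝ | ∀ u u' : ℝ → Euc d, MemX T u u' →
    ∀ t ∈ Icc (0:ℝ) T, ‖u t‖ ≤ a * normX T u u'} c

/-- `c` is the smallest constant with `‖u‖_{L²} ≤ c ‖u‖_X` for all `u ∈ X`. -/
def IsEmbL2 (d : ℕ) (T : ℝ) (c : ℝ) : Prop :=
  IsLeast {a : ℝ | ∀ u u' : ℝ → Euc d, MemX T u u' → L2norm T u ≤ a * normX T u u'} c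

/-- The smallness bound `1/√(2T² + T + c² + √((2T² + T + c²)² + 2Tc²(1+2T)))` from (A2). -/
def A2bound (T c : ℝ) : ℝ :=
  1 / Real.sqrt (2*T^2 + T + c^2 + Real.sqrt ((2*T^2 + T + c^2)^2 + 2*T*c^2*(1+2*T)))

/-! Since `X^h` is a linear space, `ε ↦ J(y_*^h + ε v^h)` is minimal at `ε = 0`, so its
derivative there vanishes. Differentiating under the integral sign (dominated by `L²` bounds
obtained from the boundedness of `F` and `DF` on the compact set
`{y_*^h(t) + ε v^h(t) : t ∈ [0,T], |ε| ≤ 1}`) gives that derivative as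
`∫₀ᵀ ⟨y' − F(y) − f, v' − DF(y) v⟩ dt + ⟨y(0) − g, v(0)⟩`, which is the `X` inner product of the
statement: `y − w_*[y]` and `v − Γ(·;v)` have derivatives `y' − F(y) − f` and `v' − DF(y) v`
and values `y(0) − g` and `v(0)` at `0`. -/

open Filter Topology

theorem hasDerivAt_integral_norm_sq {α E : Type*} [MeasurableSpace α] {μ : Measure α}
    [NormedAddCommGroup E] [InnerProductSpace ℝ E] {Φ Φ' : ℝ → α → E} {A B : α → ℝ}
    {s : Set ℝ} {x₀ : ℝ} (hs : s ∈ 𝓝 x₀)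
    (hΦ_meas : ∀ᶠ x in 𝓝 x₀, AEStronglyMeasurable (Φ x) μ)
    (hΦ'_meas : AEStronglyMeasurable (Φ' x₀) μ) (hA : MemLp A 2 μ) (hB : MemLp B 2 μ)
    (h_bound : ∀ᵐ a ∂μ, ∀ x ∈ s, ‖Φ x a‖ ≤ A a ∧ ‖Φ' x a‖ ≤ B a)
    (h_diff : ∀ᵐ a ∂μ, ∀ x ∈ s, HasDerivAt (Φ · a) (Φ' x a) x) :
    HasDerivAt (fun x => ∫ a, ‖Φ x a‖ ^ 2 ∂μ) (∫ a, 2 * ⟪Φ x₀ a, Φ' x₀ a⟫ ∂μ) x₀ := by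
  have hΦ₀ : MemLp (Φ x₀) 2 μ :=
    hA.of_le hΦ_meas.self_of_nhds <| h_bound.mono fun a ha =>
      (ha x₀ (mem_of_mem_nhds hs)).1.trans (Real.le_norm_self _)
  refine (hasDerivAt_integral_of_dominated_loc_of_deriv_le hs
    (hΦ_meas.mono fun x hx => (continuous_pow 2).comp_aestronglyMeasurable hx.norm)
    ((memLp_two_iff_integrable_sq_norm hΦ₀.1).1 hΦ₀)
    ((hΦ₀.1.inner hΦ'_meas).const_mul 2) ?_ (hA.integrable_sq.add hB.integrable_sq)
    (h_diff.mono fun a ha x hx => (ha x hx).norm_sq)).2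
  filter_upwards [h_bound] with a ha x hx
  obtain ⟨hΦA, hΦ'B⟩ := ha x hx
  calc ‖2 * ⟪Φ x a, Φ' x a⟫‖ ≤ 2 * (‖Φ x a‖ * ‖Φ' x a‖) := by
        rw [norm_mul, Real.norm_two]
        gcongr
        exact norm_inner_le_norm _ _
    _ ≤ ‖Φ x a‖ ^ 2 + ‖Φ' x a‖ ^ 2 := by nlinarith [sq_nonneg (‖Φ x a‖ - ‖Φ' x a‖)]
    _ ≤ A a ^ 2 + B a ^ 2 := by gcongr

theorem hasDerivAt_residual {E : Type*} [NormedAddCommGroup E] [NormedSpace ℝ E]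
    {F : E → E} (hF : Differentiable ℝ F) (a b p q r : E) (x : ℝ) :
    HasDerivAt (fun ε : ℝ => a + ε • b - F (p + ε • q) - r) (b - fderiv ℝ F (p + x • q) q) x := by
  have hline : ∀ c e : E, HasDerivAt (fun ε : ℝ => c + ε • e) e x := fun c e => by
    simpa using ((hasDerivAt_id x).smul_const e).const_add c
  exact (((hline a b).sub ((hF _).hasFDerivAt.comp_hasDerivAt x (hline p q))).sub_const r)

theorem hasDerivAt_integral_residual_sq {E : Type*} [NormedAddCommGroup E]
    [InnerProductSpace ℝ E] {F : E → E} (hF : ContDiff ℝ 1 F) {T : ℝ} {y y' v v' f : ℝ → E}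
    (hy : ContinuousOn y (Icc 0 T)) (hv : ContinuousOn v (Icc 0 T))
    (hy' : MemLp y' 2 (volume.restrict (Icc 0 T))) (hv' : MemLp v' 2 (volume.restrict (Icc 0 T)))
    (hf : MemLp f 2 (volume.restrict (Icc 0 T))) :
    HasDerivAt (fun ε : ℝ => ∫ t in Icc 0 T, ‖y' t + ε • v' t - F (y t + ε • v t) - f t‖ ^ 2)
      (∫ t in Icc 0 T, 2 * ⟪y' t - (F (y t) + f t), v' t - fderiv ℝ F (y t) (v t)⟫) 0 := by
  have hDF := hF.continuous_fderiv one_ne_zero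
  have hK : IsCompact (Icc 0 T ×ˢ Metric.closedBall (0 : ℝ) 1) :=
    isCompact_Icc.prod (isCompact_closedBall 0 1)
  have hw : ContinuousOn (fun p : ℝ × ℝ => y p.1 + p.2 • v p.1)
      (Icc 0 T ×ˢ Metric.closedBall (0 : ℝ) 1) :=
    (hy.comp continuousOn_fst fun _ hp => hp.1).add
      (continuousOn_snd.smul (hv.comp continuousOn_fst fun _ hp => hp.1))
  obtain ⟨MF, hMF⟩ := hK.exists_bound_of_continuousOn (hF.continuous.comp_continuousOn hw)
  obtain ⟨MD, hMD⟩ := hK.exists_bound_of_continuousOn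
    ((hDF.comp_continuousOn hw).clm_apply (hv.comp continuousOn_fst fun _ hp => hp.1))
  have my : AEStronglyMeasurable y (volume.restrict (Icc 0 T)) :=
    hy.aestronglyMeasurable measurableSet_Icc
  have mv : AEStronglyMeasurable v (volume.restrict (Icc 0 T)) :=
    hv.aestronglyMeasurable measurableSet_Icc
  have h := hasDerivAt_integral_norm_sq (μ := volume.restrict (Icc 0 T))
    (Φ := fun ε t => y' t + ε • v' t - F (y t + ε • v t) - f t)
    (Φ' := fun ε t => v' t - fderiv ℝ F (y t + ε • v t) (v t))
    (A := fun t => ‖y' t‖ + ‖v' t‖ + MF + ‖f t‖) (B := fun t => ‖v' t‖ + MD)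
    (Metric.ball_mem_nhds 0 one_pos)
    (Eventually.of_forall fun ε => ((hy'.1.add (hv'.1.const_smul ε)).sub
      (hF.continuous.comp_aestronglyMeasurable (my.add (mv.const_smul ε)))).sub hf.1)
    (hv'.1.sub (((hDF.comp_continuousOn (hy.add (hv.const_smul 0))).clm_apply hv
      ).aestronglyMeasurable measurableSet_Icc))
    (((hy'.norm.add hv'.norm).add (memLp_const MF)).add hf.norm)
    (hv'.norm.add (memLp_const MD)) ?_
    (Eventually.of_forall fun t x _ =>
      hasDerivAt_residual (hF.differentiable one_ne_zero) _ _ _ _ _ x)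
  · simpa only [zero_smul, add_zero, sub_sub] using h
  filter_upwards [ae_restrict_mem measurableSet_Icc] with t ht x hx
  have htx : (t, x) ∈ Icc 0 T ×ˢ Metric.closedBall (0 : ℝ) 1 :=
    ⟨ht, Metric.ball_subset_closedBall hx⟩
  have hx1 : ‖x‖ ≤ 1 := by simpa using htx.2
  have hFb : ‖F (y t + x • v t)‖ ≤ MF := hMF _ htx
  have hDFb : ‖fderiv ℝ F (y t + x • v t) (v t)‖ ≤ MD := hMD _ htx
  constructor
  · calc ‖y' t + x • v' t - F (y t + x • v t) - f t‖
        ≤ ‖y' t‖ + ‖x‖ * ‖v' t‖ + ‖F (y t + x • v t)‖ + ‖f t‖ := by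
          grw [norm_sub_le, norm_sub_le, norm_add_le, norm_smul]
      _ ≤ ‖y' t‖ + ‖v' t‖ + MF + ‖f t‖ := by
          grw [hx1, one_mul, hFb]
  · grw [norm_sub_le, hDFb]

namespace MemX

variable {d : ℕ} {T : ℝ} {u u' v v' : ℝ → Euc d}

theorem integrableOn (h : MemX T u u') : IntegrableOn u' (Icc 0 T) :=
  h.1.integrable one_le_two

theorem continuousOn (h : MemX T u u') : ContinuousOn u (Icc 0 T) := by
  have hprim : ContinuousOn (fun t => u 0 + ∫ s in Ioc 0 t, u' s) (Icc 0 T) :=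
    continuousOn_const.add (intervalIntegral.continuousOn_primitive h.integrableOn)
  refine hprim.congr fun t ht => ?_
  rw [h.2 t ht, intervalIntegral.integral_of_le ht.1]

theorem add_smul (hu : MemX T u u') (hv : MemX T v v') (ε : ℝ) :
    MemX T (fun t => u t + ε • v t) (fun t => u' t + ε • v' t) := by
  refine ⟨hu.1.add (hv.1.const_smul ε), fun t ht => ?_⟩
  have hsub : ∀ {w w' : ℝ → Euc d}, MemX T w w' → IntervalIntegrable w' volume 0 t :=
    fun hw => (intervalIntegrable_iff_integrableOn_Ioc_of_le ht.1).2
      (hw.integrableOn.mono_set (Ioc_subset_Icc_self.trans (Icc_subset_Icc_right ht.2)))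
  beta_reduce
  rw [hu.2 t ht, hv.2 t ht,
    intervalIntegral.integral_add (hsub hu) (g := fun s => ε • v' s) ((hsub hv).smul ε),
    intervalIntegral.integral_smul]
  module

end MemX

theorem PWLinear.add_smul {d : ℕ} {T : ℝ} {P : TimePartition T} {u v : ℝ → Euc d}
    (hu : PWLinear P u) (hv : PWLinear P v) (ε : ℝ) :
    PWLinear P (fun t => u t + ε • v t) := by
  intro i hi
  obtain ⟨a, b, hab⟩ := hu i hi
  obtain ⟨c, e, hce⟩ := hv i hi
  refine ⟨a + ε • c, b + ε • e, fun t ht => ?_⟩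
  beta_reduce
  rw [hab t ht, hce t ht]
  module

theorem hasDerivAt_Jfun_add_smul {d : ℕ} {T : ℝ} (hT : 0 ≤ T) {F : Euc d → Euc d}
    (hF : ContDiff ℝ 1 F) {f : ℝ → Euc d} (hf : MemLp f 2 (volume.restrict (Icc 0 T)))
    (g : Euc d) {y y' v v' : ℝ → Euc d} (hy : MemX T y y') (hv : MemX T v v') :
    HasDerivAt (fun ε : ℝ => Jfun T F f g (fun t => y t + ε • v t) (fun t => y' t + ε • v' t))
      ((∫ t in (0:ℝ)..T, ⟪y' t - (F (y t) + f t), v' t - fderiv ℝ F (y t) (v t)⟫)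
        + ⟪y 0 - g, v 0⟫) 0 := by
  have hIcc : ∀ φ : ℝ → ℝ, ∫ t in (0:ℝ)..T, φ t = ∫ t in Icc 0 T, φ t := fun φ => by
    rw [intervalIntegral.integral_of_le hT, integral_Icc_eq_integral_Ioc]
  have hres := hasDerivAt_integral_residual_sq hF hy.continuousOn hv.continuousOn hy.1 hv.1 hf
  have hend : HasDerivAt (fun ε : ℝ => ‖y 0 + ε • v 0 - g‖ ^ 2) (2 * ⟪y 0 - g, v 0⟫) 0 := by
    simpa using ((((hasDerivAt_id (0:ℝ)).smul_const (v 0)).const_add (y 0)).sub_const g).norm_sq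
  simp only [Jfun, hIcc]
  refine ((hres.const_mul (1/2)).add (hend.const_mul (1/2))).congr_deriv ?_
  rw [integral_const_mul]
  ring

/-- Lemma 3.3 (geometric orthogonality property): for any lsfem solution `y_*^h` of the
nonlinear problem, with `w_*[y_*^h](t) = g + ∫₀ᵗ (F(y_*^h(s)) + f(s)) ds` and
`Γ(t;v^h) = ∫₀ᵗ DF(y_*^h(s)) v^h(s) ds`, one has
`⟨y_*^h − w_*[y_*^h], v^h − Γ(·;v^h)⟩_X = 0` for all `v^h ∈ X^h`. -/
theorem lsfem_orthogonality_identity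
    {d : ℕ} {T : ℝ} (hT : 0 < T)
    (F : Euc d → Euc d) (hF : ContDiff ℝ 1 F)
    (f : ℝ → Euc d) (hf : MemLp f 2 (volume.restrict (Icc (0:ℝ) T)))
    (g : Euc d)
    (P : TimePartition T) (yh yh' : ℝ → Euc d)
    (hyh : IsLSFEMSol T F f g P yh yh') :
    ∀ v v' : ℝ → Euc d, MemX T v v' → PWLinear P v →
      innerX T
        (fun t => yh t - (g + ∫ s in (0:ℝ)..t, (F (yh s) + f s)))
        (fun t => yh' t - (F (yh t) + f t))
        (fun t => v t - ∫ s in (0:ℝ)..t, fderiv ℝ F (yh s) (v s))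
        (fun t => v' t - fderiv ℝ F (yh t) (v t)) = 0 := by
  intro v v' hv hvP
  obtain ⟨hy, hyP, hmin⟩ := hyh
  have hJ := hasDerivAt_Jfun_add_smul hT.le hF hf g hy hv
  have hloc : IsLocalMin
      (fun ε : ℝ => Jfun T F f g (fun t => yh t + ε • v t) (fun t => yh' t + ε • v' t)) 0 :=
    Eventually.of_forall fun ε => by
      simpa using hmin _ _ (hy.add_smul hv ε) (hyP.add_smul hvP ε)
  simpa only [innerX, intervalIntegral.integral_same, add_zero, sub_zero]
    using hloc.hasDerivAt_eq_zero hJ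
end
end

section
/- Let F : ℝ^d → ℝ^d be C¹, y_* ∈ X, and set M = sup_{t∈[0,T]} ‖DF(y_*(t))‖²_op. For v ∈ X define w(t) = −∫₀ᵗ DF(y_*(s)) v(s) ds − ∫₀ᵗ ∫ₛᵀ [DF(y_*(τ))]ᵀ (v'(τ) − DF(y_*(τ)) v(τ)) dτ ds − ∫₀ᵀ [DF(y_*(s))]ᵀ (v'(s) − DF(y_*(s)) v(s)) ds. Then ‖w‖²_X ≤ 2M(2T² + T + 𝔠̃² + T𝔠̃²(1+2T)M)‖v‖²_X. In particular, if M < 1/(2T² + T + 𝔠̃² + √((2T² + T + 𝔠̃²)² + 2T𝔠̃²(1+2T))), then ‖w‖_X < ‖v‖_X for every nonzero v ∈ X. -/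
open MeasureTheory Set
open scoped RealInnerProductSpace

noncomputable section

/-! With `A(t) = DF(y_*(t))` and `g = Aᵀ(v' - A v)` one has `w(0) = -∫₀ᵀ g` and
`w' = -A v - ∫ₜᵀ g`. Cauchy–Schwarz bounds `‖w(0)‖²` and every `‖∫ₜᵀ g‖²` by `T ‖g‖²_{L²}`,
and `‖A‖² ≤ M` gives `‖g‖²_{L²} ≤ 2M ‖v'‖²_{L²} + 2M² ‖v‖²_{L²}`, so that
`‖w‖²_X ≤ 2M ‖v‖²_{L²} + (2T² + T) ‖g‖²_{L²}`; the embedding `‖v‖_{L²} ≤ 𝔠̃ ‖v‖_X` then gives the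
estimate. The smallness condition says that `M` lies below the positive root of
`2BM + CM² = 1`, where `B = 2T² + T + 𝔠̃²` and `C = 2T𝔠̃²(1 + 2T)`. -/

theorem sq_integral_norm_le_measureReal_mul {α E : Type*} [MeasurableSpace α] {μ : Measure α}
    [IsFiniteMeasure μ] [NormedAddCommGroup E] {f : α → E} (hf : MemLp f 2 μ) :
    (∫ x, ‖f x‖ ∂μ) ^ 2 ≤ μ.real univ * ∫ x, ‖f x‖ ^ 2 ∂μ := by
  have holder := integral_mul_norm_le_Lp_mul_Lq (f := fun x => ‖f x‖) (g := fun _ => (1 : ℝ))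
    Real.HolderConjugate.two_two (by simpa using hf.norm) (by simpa using memLp_const (1 : ℝ))
  simp only [norm_norm, norm_one, mul_one, one_pow, integral_const, smul_eq_mul,
    ← Real.sqrt_eq_rpow, Real.rpow_two] at holder
  calc (∫ x, ‖f x‖ ∂μ) ^ 2 ≤ (√(∫ x, ‖f x‖ ^ 2 ∂μ) * √(μ.real univ)) ^ 2 :=
        pow_le_pow_left₀ (integral_nonneg fun _ => norm_nonneg _) holder 2
    _ = μ.real univ * ∫ x, ‖f x‖ ^ 2 ∂μ := by
        rw [mul_pow, Real.sq_sqrt (integral_nonneg fun _ => by positivity),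
          Real.sq_sqrt measureReal_nonneg, mul_comm]

theorem ContinuousOn.memLp_top_restrict {E : Type*} [NormedAddCommGroup E] {K : Set ℝ}
    {f : ℝ → E} (hf : ContinuousOn f K) (hK : IsCompact K) (hKm : MeasurableSet K) :
    MemLp f ⊤ (volume.restrict K) := by
  obtain ⟨C, hC⟩ := hK.exists_bound_of_continuousOn hf
  exact memLp_top_of_bound (hf.aestronglyMeasurable hKm) C
    ((ae_restrict_iff' hKm).2 (ae_of_all _ hC))

theorem sq_intervalIntegral_norm_le {E : Type*} [NormedAddCommGroup E] {T : ℝ} (hT : 0 ≤ T)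
    {g : ℝ → E} (hg : MemLp g 2 (volume.restrict (Icc 0 T))) :
    (∫ t in (0:ℝ)..T, ‖g t‖) ^ 2 ≤ T * ∫ t in (0:ℝ)..T, ‖g t‖ ^ 2 := by
  simpa [intervalIntegral.integral_of_le hT, ← integral_Icc_eq_integral_Ioc, hT]
    using sq_integral_norm_le_measureReal_mul hg

section EnergySpace
variable {d : ℕ} {T : ℝ}

theorem normX_sq (hT : 0 ≤ T) (u u' : ℝ → Euc d) :
    normX T u u' ^ 2 = (∫ t in (0:ℝ)..T, ‖u' t‖ ^ 2) + ‖u 0‖ ^ 2 := by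
  have h : innerX T u u' u u' = (∫ t in (0:ℝ)..T, ‖u' t‖ ^ 2) + ‖u 0‖ ^ 2 := by
    simp only [innerX, real_inner_self_eq_norm_sq]
  rw [normX, h, Real.sq_sqrt]
  exact add_nonneg (intervalIntegral.integral_nonneg hT fun _ _ => sq_nonneg _) (sq_nonneg _)

theorem MemX.continuousOn_s12 {u u' : ℝ → Euc d} (hT : 0 ≤ T) (hu : MemX T u u') :
    ContinuousOn u (Icc 0 T) := by
  have hprim := intervalIntegral.continuousOn_primitive_interval (a := 0) (b := T)
    (μ := volume) (f := u') (by rw [uIcc_of_le hT]; exact hu.1.integrable one_le_two)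
  rw [uIcc_of_le hT] at hprim
  exact (continuousOn_const.add hprim).congr hu.2

end EnergySpace

theorem norm_adjoint_apply_sub_sq_le {E : Type*} [NormedAddCommGroup E] [InnerProductSpace ℝ E]
    [CompleteSpace E] {A : E →L[ℝ] E} {M : ℝ} (hA : ‖A‖ ^ 2 ≤ M) (a b : E) :
    ‖ContinuousLinearMap.adjoint A (a - A b)‖ ^ 2 ≤ 2 * M * ‖a‖ ^ 2 + 2 * M ^ 2 * ‖b‖ ^ 2 := by
  have hadj : ‖ContinuousLinearMap.adjoint A (a - A b)‖ ≤ ‖A‖ * (‖a‖ + ‖A‖ * ‖b‖) := by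
    refine ((ContinuousLinearMap.adjoint A).le_opNorm _).trans ?_
    rw [LinearIsometryEquiv.norm_map]
    gcongr
    exact (norm_sub_le _ _).trans (by gcongr; exact A.le_opNorm b)
  calc ‖ContinuousLinearMap.adjoint A (a - A b)‖ ^ 2
      ≤ ‖A‖ ^ 2 * (‖a‖ + ‖A‖ * ‖b‖) ^ 2 := by rw [← mul_pow]; gcongr
    _ ≤ ‖A‖ ^ 2 * (2 * (‖a‖ ^ 2 + (‖A‖ * ‖b‖) ^ 2)) := by gcongr; exact add_sq_le
    _ = 2 * ‖A‖ ^ 2 * ‖a‖ ^ 2 + 2 * (‖A‖ ^ 2) ^ 2 * ‖b‖ ^ 2 := by ring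
    _ ≤ 2 * M * ‖a‖ ^ 2 + 2 * M ^ 2 * ‖b‖ ^ 2 := by gcongr

theorem norm_neg_apply_sub_sq_le {E F : Type*} [NormedAddCommGroup E] [NormedSpace ℝ E]
    [NormedAddCommGroup F] [NormedSpace ℝ F] {A : E →L[ℝ] F} {M : ℝ} (hA : ‖A‖ ^ 2 ≤ M)
    (x : E) (c : F) : ‖-A x - c‖ ^ 2 ≤ 2 * M * ‖x‖ ^ 2 + 2 * ‖c‖ ^ 2 := by
  calc ‖-A x - c‖ ^ 2 ≤ (‖A‖ * ‖x‖ + ‖c‖) ^ 2 := by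
        gcongr
        exact (norm_sub_le _ _).trans (by rw [norm_neg]; gcongr; exact A.le_opNorm x)
    _ ≤ 2 * (‖A‖ ^ 2 * ‖x‖ ^ 2 + ‖c‖ ^ 2) := by rw [← mul_pow]; exact add_sq_le
    _ ≤ 2 * M * ‖x‖ ^ 2 + 2 * ‖c‖ ^ 2 := by nlinarith [sq_nonneg ‖x‖]

section Estimate
variable {d : ℕ} {T M : ℝ} {A : ℝ → Euc d →L[ℝ] Euc d} {v v' : ℝ → Euc d}

def adjointResidual (A : ℝ → Euc d →L[ℝ] Euc d) (v v' : ℝ → Euc d) (τ : ℝ) : Euc d :=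
  ContinuousLinearMap.adjoint (A τ) (v' τ - A τ (v τ))

theorem memLp_adjointResidual (hT : 0 ≤ T) (hA : ContinuousOn A (Icc 0 T))
    (hv : MemX T v v') : MemLp (adjointResidual A v v') 2 (volume.restrict (Icc 0 T)) := by
  have hAdj : MemLp (fun τ => ContinuousLinearMap.adjoint (A τ)) ⊤ (volume.restrict (Icc 0 T)) :=
    ((ContinuousLinearMap.adjoint (𝕜 := ℝ) (E := Euc d) (F := Euc d)).continuous.comp_continuousOn
      hA).memLp_top_restrict isCompact_Icc measurableSet_Icc
  have hAv : MemLp (fun τ => A τ (v τ)) 2 (volume.restrict (Icc 0 T)) :=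
    ((hA.clm_apply (hv.continuousOn_s12 hT)).memLp_top_restrict isCompact_Icc
      measurableSet_Icc).mono_exponent le_top
  exact (ContinuousLinearMap.id ℝ (Euc d →L[ℝ] Euc d)).memLp_of_bilin 2 hAdj (hv.1.sub hAv)

theorem integral_norm_sq_adjointResidual_le (hT : 0 ≤ T) (hA : ContinuousOn A (Icc 0 T))
    (hAM : ∀ t ∈ Icc 0 T, ‖A t‖ ^ 2 ≤ M) (hv : MemX T v v') :
    ∫ t in (0:ℝ)..T, ‖adjointResidual A v v' t‖ ^ 2 ≤
      2 * M * (∫ t in (0:ℝ)..T, ‖v' t‖ ^ 2) + 2 * M ^ 2 * ∫ t in (0:ℝ)..T, ‖v t‖ ^ 2 := by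
  have hv'_sq : IntervalIntegrable (fun t => ‖v' t‖ ^ 2) volume 0 T :=
    (intervalIntegrable_iff_integrableOn_Icc_of_le hT).2 (hv.1.integrable_norm_pow two_ne_zero)
  have hv_sq : IntervalIntegrable (fun t => ‖v t‖ ^ 2) volume 0 T :=
    ((hv.continuousOn_s12 hT).norm.pow 2).intervalIntegrable_of_Icc hT
  have hg_sq : IntervalIntegrable (fun t => ‖adjointResidual A v v' t‖ ^ 2) volume 0 T :=
    (intervalIntegrable_iff_integrableOn_Icc_of_le hT).2
      ((memLp_adjointResidual hT hA hv).integrable_norm_pow two_ne_zero)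
  calc ∫ t in (0:ℝ)..T, ‖adjointResidual A v v' t‖ ^ 2
      ≤ ∫ t in (0:ℝ)..T, (2 * M * ‖v' t‖ ^ 2 + 2 * M ^ 2 * ‖v t‖ ^ 2) :=
        intervalIntegral.integral_mono_on hT hg_sq ((hv'_sq.const_mul _).add (hv_sq.const_mul _))
          fun t ht => norm_adjoint_apply_sub_sq_le (hAM t ht) _ _
    _ = _ := by
        rw [intervalIntegral.integral_add (hv'_sq.const_mul _) (hv_sq.const_mul _),
          intervalIntegral.integral_const_mul, intervalIntegral.integral_const_mul]

theorem integral_norm_sq_neg_apply_sub_integral_le (hT : 0 ≤ T) (hA : ContinuousOn A (Icc 0 T))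
    (hAM : ∀ t ∈ Icc 0 T, ‖A t‖ ^ 2 ≤ M) (hv : MemX T v v') :
    ∫ t in (0:ℝ)..T, ‖-A t (v t) - ∫ τ in t..T, adjointResidual A v v' τ‖ ^ 2 ≤
      2 * M * (∫ t in (0:ℝ)..T, ‖v t‖ ^ 2) +
        2 * T ^ 2 * ∫ t in (0:ℝ)..T, ‖adjointResidual A v v' t‖ ^ 2 := by
  set g := adjointResidual A v v'
  set I := ∫ t in (0:ℝ)..T, ‖g t‖ ^ 2
  have hg := memLp_adjointResidual hT hA hv
  have hgi : IntegrableOn g (Icc 0 T) := hg.integrable one_le_two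
  have htail : ∀ t ∈ Icc 0 T, ‖∫ τ in t..T, g τ‖ ^ 2 ≤ T * I := fun t ht =>
    calc ‖∫ τ in t..T, g τ‖ ^ 2 ≤ (∫ τ in (0:ℝ)..T, ‖g τ‖) ^ 2 := by
          gcongr
          exact (intervalIntegral.norm_integral_le_integral_norm ht.2).trans
            (intervalIntegral.integral_mono_interval ht.1 ht.2 le_rfl
              (ae_of_all _ fun _ => norm_nonneg _)
              ((intervalIntegrable_iff_integrableOn_Icc_of_le hT).2 hgi.norm))
      _ ≤ T * I := sq_intervalIntegral_norm_le hT hg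
  have htail_cont : ContinuousOn (fun t => ∫ τ in t..T, g τ) (Icc 0 T) := by
    simpa [uIcc_of_le hT] using
      intervalIntegral.continuousOn_primitive_interval_left (a := 0) (b := T) (μ := volume)
        (by rwa [uIcc_of_le hT])
  have hlhs : IntervalIntegrable (fun t => ‖-A t (v t) - ∫ τ in t..T, g τ‖ ^ 2) volume 0 T :=
    (((hA.clm_apply (hv.continuousOn_s12 hT)).neg.sub htail_cont).norm.pow 2).intervalIntegrable_of_Icc
      hT
  have hv_sq : IntervalIntegrable (fun t => ‖v t‖ ^ 2) volume 0 T :=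
    ((hv.continuousOn_s12 hT).norm.pow 2).intervalIntegrable_of_Icc hT
  calc ∫ t in (0:ℝ)..T, ‖-A t (v t) - ∫ τ in t..T, g τ‖ ^ 2
      ≤ ∫ t in (0:ℝ)..T, (2 * M * ‖v t‖ ^ 2 + 2 * (T * I)) :=
        intervalIntegral.integral_mono_on hT hlhs
          ((hv_sq.const_mul _).add intervalIntegrable_const) fun t ht =>
            (norm_neg_apply_sub_sq_le (hAM t ht) _ _).trans (by gcongr; exact htail t ht)
    _ = 2 * M * (∫ t in (0:ℝ)..T, ‖v t‖ ^ 2) + 2 * T ^ 2 * I := by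
        rw [intervalIntegral.integral_add (hv_sq.const_mul _) intervalIntegrable_const,
          intervalIntegral.integral_const_mul, intervalIntegral.integral_const, smul_eq_mul]
        ring

theorem normX_sq_le_of_adjointResidual (hT : 0 ≤ T) (hA : ContinuousOn A (Icc 0 T))
    (hAM : ∀ t ∈ Icc 0 T, ‖A t‖ ^ 2 ≤ M) (hv : MemX T v v') {c : ℝ}
    (hc : L2norm T v ≤ c * normX T v v') {w w' : ℝ → Euc d}
    (hw : w 0 = -∫ τ in (0:ℝ)..T, adjointResidual A v v' τ)
    (hw' : w' = fun t => -A t (v t) - ∫ τ in t..T, adjointResidual A v v' τ) :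
    normX T w w' ^ 2 ≤ 2 * M * (2*T^2 + T + c^2 + T*c^2*(1+2*T)*M) * normX T v v' ^ 2 := by
  have hM : 0 ≤ M := (sq_nonneg _).trans (hAM 0 ⟨le_rfl, hT⟩)
  set g := adjointResidual A v v'
  set N := normX T v v'
  have hv'_le : ∫ t in (0:ℝ)..T, ‖v' t‖ ^ 2 ≤ N ^ 2 := by
    rw [normX_sq hT]; linarith [sq_nonneg ‖v 0‖]
  have hv_le : ∫ t in (0:ℝ)..T, ‖v t‖ ^ 2 ≤ c ^ 2 * N ^ 2 := by
    rw [← mul_pow, ← Real.sq_sqrt (intervalIntegral.integral_nonneg hT fun _ _ => sq_nonneg _)]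
    exact pow_le_pow_left₀ (Real.sqrt_nonneg _) hc 2
  have hw_le : ‖w 0‖ ^ 2 ≤ T * ∫ t in (0:ℝ)..T, ‖g t‖ ^ 2 := by
    rw [hw, norm_neg]
    exact (pow_le_pow_left₀ (norm_nonneg _) (intervalIntegral.norm_integral_le_integral_norm hT)
      2).trans (sq_intervalIntegral_norm_le hT (memLp_adjointResidual hT hA hv))
  have hg_le := integral_norm_sq_adjointResidual_le hT hA hAM hv
  have hw'_le := integral_norm_sq_neg_apply_sub_integral_le hT hA hAM hv
  rw [normX_sq hT, hw']
  calc _ ≤ 2 * M * (∫ t in (0:ℝ)..T, ‖v t‖ ^ 2) + (2 * T ^ 2 + T) * ∫ t in (0:ℝ)..T, ‖g t‖ ^ 2 :=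
        by linarith
    _ ≤ 2 * M * (c ^ 2 * N ^ 2) +
          (2 * T ^ 2 + T) * (2 * M * N ^ 2 + 2 * M ^ 2 * (c ^ 2 * N ^ 2)) := by
        grw [hg_le, hv_le, hv'_le]
    _ = _ := by ring

end Estimate

theorem two_mul_mul_add_mul_sq_lt_one {B C M : ℝ} (hC : 0 ≤ C) (hM : 0 ≤ M)
    (hMlt : M < 1 / (B + √(B ^ 2 + C))) : 2 * M * B + C * M ^ 2 < 1 := by
  set R := √(B ^ 2 + C)
  have hR : R ^ 2 = B ^ 2 + C := Real.sq_sqrt (by positivity)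
  obtain ⟨hnegR, hBR⟩ := abs_le.1 (Real.abs_le_sqrt (le_add_of_nonneg_right hC) : |B| ≤ R)
  have hpos : 0 < B + R := by
    by_contra! h
    rw [show B + R = 0 by linarith, div_zero] at hMlt
    linarith
  have hMR : M * (B + R) < 1 := by rwa [lt_div_iff₀ hpos] at hMlt
  -- `1 - 2MB - CM² = (1 - M(B + R)) (1 + M(R - B))` since `C = R² - B²`
  nlinarith [mul_pos (sub_pos.2 hMR) (by nlinarith : 0 < 1 + M * (R - B))]

/-- Estimate on `w = 𝒯 ∘ D𝒢(y_*) v` from the verification of condition (C1):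
`‖w‖²_X ≤ 2M(2T² + T + 𝔠̃² + T𝔠̃²(1+2T)M)‖v‖²_X`, and consequently `‖w‖_X < ‖v‖_X`
for nonzero `v` whenever `M` satisfies the smallness bound. -/
theorem lsfem_C1_estimate
    {d : ℕ} {T : ℝ} (hT : 0 < T)
    (F : Euc d → Euc d) (hF : ContDiff ℝ 1 F)
    (𝔠t : ℝ) (hct : IsEmbL2 d T 𝔠t)
    (y y' : ℝ → Euc d) (hy : MemX T y y')
    (M : ℝ) (hM : M = sSup ((fun t => ‖fderiv ℝ F (y t)‖ ^ 2) '' Icc (0:ℝ) T))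
    (v v' : ℝ → Euc d) (hv : MemX T v v')
    (w w' : ℝ → Euc d)
    (hw : w = fun t =>
      -(∫ s in (0:ℝ)..t, fderiv ℝ F (y s) (v s)) -
      (∫ s in (0:ℝ)..t, ∫ τ in s..T,
        (ContinuousLinearMap.adjoint (fderiv ℝ F (y τ))) (v' τ - fderiv ℝ F (y τ) (v τ))) -
      ∫ s in (0:ℝ)..T,
        (ContinuousLinearMap.adjoint (fderiv ℝ F (y s))) (v' s - fderiv ℝ F (y s) (v s)))
    (hw' : w' = fun t =>
      -(fderiv ℝ F (y t) (v t)) -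
      ∫ τ in t..T,
        (ContinuousLinearMap.adjoint (fderiv ℝ F (y τ))) (v' τ - fderiv ℝ F (y τ) (v τ))) :
    normX T w w' ^ 2 ≤
      2 * M * (2*T^2 + T + 𝔠t^2 + T*𝔠t^2*(1+2*T)*M) * normX T v v' ^ 2 ∧
    (M < 1 / (2*T^2 + T + 𝔠t^2 + Real.sqrt ((2*T^2 + T + 𝔠t^2)^2 + 2*T*𝔠t^2*(1+2*T))) →
      0 < normX T v v' → normX T w w' < normX T v v') := by
  set A : ℝ → Euc d →L[ℝ] Euc d := fun t => fderiv ℝ F (y t)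
  have hA : ContinuousOn A (Icc 0 T) :=
    (hF.continuous_fderiv one_ne_zero).comp_continuousOn (hy.continuousOn_s12 hT.le)
  have hAM : ∀ t ∈ Icc 0 T, ‖A t‖ ^ 2 ≤ M := fun t ht => hM ▸
    le_csSup (isCompact_Icc.image_of_continuousOn (hA.norm.pow 2)).bddAbove (mem_image_of_mem _ ht)
  have hw0 : w 0 = -∫ τ in (0:ℝ)..T, adjointResidual A v v' τ := by
    simp [hw, adjointResidual, A]
  have hest := normX_sq_le_of_adjointResidual hT.le hA hAM hv (hct.1 v v' hv) hw0 hw'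
  refine ⟨hest, fun hMlt hv0 => lt_of_pow_lt_pow_left₀ 2 hv0.le (hest.trans_lt ?_)⟩
  have hM0 : 0 ≤ M := (sq_nonneg _).trans (hAM 0 ⟨le_rfl, hT.le⟩)
  have hsmall := two_mul_mul_add_mul_sq_lt_one (by positivity) hM0 hMlt
  calc _ = (2 * M * (2*T^2 + T + 𝔠t^2) + 2*T*𝔠t^2*(1+2*T) * M ^ 2) * normX T v v' ^ 2 := by ring
    _ < 1 * normX T v v' ^ 2 := by gcongr
    _ = _ := one_mul _
end
end

section
/- Let F : ℝ^d → ℝ^d be C², f ∈ L²(0,T;ℝ^d), and u, v ∈ X. Then ∫₀ᵀ ⟨−D²F(u(t))(v(t),v(t)), u'(t) − F(u(t)) − f(t)⟩ dt + ∫₀ᵀ ‖v'(t) − DF(u(t)) v(t)‖² dt + ‖v(0)‖² ≥ ‖v‖²_X · (1 − 2𝔠̃ · sup_{t∈[0,T]} ‖DF(u(t))‖_op − 𝔠𝔠̃ · (sup_{t∈[0,T]} ⦀D²F(u(t))⦀) · ‖u' − F∘u − f‖_{L²(0,T;ℝ^d)}). -/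
open MeasureTheory Set
open scoped RealInnerProductSpace

noncomputable section

lemma cs_aux {α : Type*} [MeasurableSpace α] {μ : Measure α} {E : Type*} [NormedAddCommGroup E]
    {f g : α → E} (hf : MemLp f 2 μ) (hg : MemLp g 2 μ) :
    ∫ a, ‖f a‖ * ‖g a‖ ∂μ ≤
      Real.sqrt (∫ a, ‖f a‖ ^ 2 ∂μ) * Real.sqrt (∫ a, ‖g a‖ ^ 2 ∂μ) := by
  have hpq : Real.HolderConjugate 2 2 := Real.HolderConjugate.two_two
  have h2 : ENNReal.ofReal (2:ℝ) = 2 := by norm_num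
  have h := MeasureTheory.integral_mul_norm_le_Lp_mul_Lq hpq (h2 ▸ hf) (h2 ▸ hg)
  have e : ∀ (h : α → E), (∫ a, ‖h a‖ ^ (2:ℝ) ∂μ) = ∫ a, ‖h a‖ ^ 2 ∂μ := by
    intro h
    simp_rw [show (2:ℝ) = ((2:ℕ):ℝ) by norm_num, Real.rpow_natCast]
  rw [e, e] at h
  refine h.trans (le_of_eq ?_)
  rw [Real.sqrt_eq_rpow, Real.sqrt_eq_rpow]


set_option maxHeartbeats 1000000 in
/-- Estimate (Eq_2nd_derivative_est_J) on the second variation of `J`: for `u, v ∈ X`,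
`∫₀ᵀ ⟨−D²F(u)(v,v), u' − F(u) − f⟩ + ∫₀ᵀ ‖v' − DF(u)v‖² + ‖v(0)‖²
  ≥ ‖v‖²_X (1 − 2𝔠̃ sup‖DF(u(t))‖ − 𝔠𝔠̃ (sup⦀D²F(u(t))⦀) ‖u' − F∘u − f‖_{L²})`. -/
theorem lsfem_second_variation_estimate
    {d : ℕ} {T : ℝ} (hT : 0 < T)
    (F : Euc d → Euc d) (hF : ContDiff ℝ 2 F)
    (f : ℝ → Euc d) (hf : MemLp f 2 (volume.restrict (Icc (0:ℝ) T)))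
    (𝔠 𝔠t : ℝ) (hc : IsEmbC d T 𝔠) (hct : IsEmbL2 d T 𝔠t)
    (u u' v v' : ℝ → Euc d) (hu : MemX T u u') (hv : MemX T v v') :
    normX T v v' ^ 2 *
        (1 - 2 * 𝔠t * sSup ((fun t => ‖fderiv ℝ F (u t)‖) '' Icc (0:ℝ) T) -
          𝔠 * 𝔠t * sSup ((fun t => ‖fderiv ℝ (fderiv ℝ F) (u t)‖) '' Icc (0:ℝ) T) *
            L2norm T (fun t => u' t - F (u t) - f t)) ≤
      (∫ t in (0:ℝ)..T, ⟪-(fderiv ℝ (fderiv ℝ F) (u t) (v t) (v t)),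
          u' t - F (u t) - f t⟫) +
        (∫ t in (0:ℝ)..T, ‖v' t - fderiv ℝ F (u t) (v t)‖ ^ 2) + ‖v 0‖ ^ 2 := by
  set μ : Measure ℝ := volume.restrict (Icc (0:ℝ) T) with hμdef
  haveI : IsFiniteMeasure μ := by
    constructor
    rw [Measure.restrict_apply_univ]
    exact isCompact_Icc.measure_lt_top
  have hIoc : volume.restrict (Ioc (0:ℝ) T) = μ := Measure.restrict_congr_set Ioc_ae_eq_Icc
  have hInt : ∀ g : ℝ → ℝ, (∫ t in (0:ℝ)..T, g t) = ∫ t, g t ∂μ := by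
    intro g
    rw [intervalIntegral.integral_of_le hT.le, ← hIoc]
  have hae : ∀ᵐ t ∂μ, t ∈ Icc (0:ℝ) T := ae_restrict_mem measurableSet_Icc
  have h0T : (0:ℝ) ∈ Icc (0:ℝ) T := ⟨le_refl 0, hT.le⟩
  -- continuity of u, v on [0,T]
  have hcont : ∀ (w w' : ℝ → Euc d), MemX T w w' → ContinuousOn w (Icc (0:ℝ) T) := by
    intro w w' hw
    have hint : IntegrableOn w' (Icc (0:ℝ) T) volume := hw.1.integrable one_le_two
    have h1 : ContinuousOn (fun t => ∫ s in (0:ℝ)..t, w' s) (Icc (0:ℝ) T) := by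
      have := intervalIntegral.continuousOn_primitive_interval (a := (0:ℝ)) (b := T)
        (μ := volume) (f := w') (by rwa [uIcc_of_le hT.le])
      rwa [uIcc_of_le hT.le] at this
    exact (continuousOn_const.add h1).congr fun t ht => hw.2 t ht
  have hucont := hcont u u' hu
  have hvcont := hcont v v' hv
  have hum : AEStronglyMeasurable u μ := hucont.aestronglyMeasurable measurableSet_Icc
  have hvm : AEStronglyMeasurable v μ := hvcont.aestronglyMeasurable measurableSet_Icc
  -- derivatives of F
  have hDF : Continuous (fderiv ℝ F) := hF.continuous_fderiv two_ne_zero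
  have hDF1 : ContDiff ℝ 1 (fderiv ℝ F) := hF.fderiv_right (by norm_num)
  have hD2F : Continuous (fderiv ℝ (fderiv ℝ F)) := hDF1.continuous_fderiv one_ne_zero
  set M1 := sSup ((fun t => ‖fderiv ℝ F (u t)‖) '' Icc (0:ℝ) T) with hM1def
  set M2 := sSup ((fun t => ‖fderiv ℝ (fderiv ℝ F) (u t)‖) '' Icc (0:ℝ) T) with hM2def
  have hg1c : ContinuousOn (fun t => ‖fderiv ℝ F (u t)‖) (Icc (0:ℝ) T) :=
    (hDF.comp_continuousOn hucont).norm
  have hg2c : ContinuousOn (fun t => ‖fderiv ℝ (fderiv ℝ F) (u t)‖) (Icc (0:ℝ) T) :=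
    ContinuousOn.norm (f := fun t => fderiv ℝ (fderiv ℝ F) (u t)) (hD2F.comp_continuousOn hucont)
  have hM1 : ∀ t ∈ Icc (0:ℝ) T, ‖fderiv ℝ F (u t)‖ ≤ M1 := fun t ht =>
    le_csSup (isCompact_Icc.bddAbove_image hg1c) (mem_image_of_mem _ ht)
  have hM2 : ∀ t ∈ Icc (0:ℝ) T, ‖fderiv ℝ (fderiv ℝ F) (u t)‖ ≤ M2 := fun t ht =>
    le_csSup (isCompact_Icc.bddAbove_image hg2c) (mem_image_of_mem _ ht)
  have hM1n : 0 ≤ M1 := le_trans (norm_nonneg _) (hM1 0 h0T)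
  have hM2n : 0 ≤ M2 := le_trans (norm_nonneg (fderiv ℝ (fderiv ℝ F) (u 0))) (hM2 0 h0T)
  -- the energy norm of v
  set N := normX T v v' with hNdef
  have hInner : innerX T v v' v v' = (∫ t, ‖v' t‖ ^ 2 ∂μ) + ‖v 0‖ ^ 2 := by
    unfold innerX
    simp_rw [real_inner_self_eq_norm_sq]
    rw [hInt]
  have hIv'n : 0 ≤ ∫ t, ‖v' t‖ ^ 2 ∂μ := integral_nonneg fun t => sq_nonneg _
  have hNsq : N ^ 2 = (∫ t, ‖v' t‖ ^ 2 ∂μ) + ‖v 0‖ ^ 2 := by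
    rw [hNdef]
    unfold normX
    rw [Real.sq_sqrt (by rw [hInner]; positivity), hInner]
  have hNn : 0 ≤ N := Real.sqrt_nonneg _
  have hsv' : Real.sqrt (∫ t, ‖v' t‖ ^ 2 ∂μ) ≤ N := by
    rw [hNdef]
    unfold normX
    apply Real.sqrt_le_sqrt
    rw [hInner]
    nlinarith [sq_nonneg ‖v 0‖]
  have hsv'n : 0 ≤ Real.sqrt (∫ t, ‖v' t‖ ^ 2 ∂μ) := Real.sqrt_nonneg _
  -- pointwise bound on v
  have hvC : ∀ t ∈ Icc (0:ℝ) T, ‖v t‖ ≤ 𝔠 * N := fun t ht => hc.1 v v' hv t ht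
  have hCn : 0 ≤ 𝔠 * N := le_trans (norm_nonneg _) (hvC 0 h0T)
  -- MemLp facts
  have hv'2 : MemLp v' 2 μ := hv.1
  have hu'2 : MemLp u' 2 μ := hu.1
  have hv2 : MemLp v 2 μ := MemLp.of_bound hvm (𝔠 * N) (hae.mono fun t ht => hvC t ht)
  have hFuc : ContinuousOn (fun t => F (u t)) (Icc (0:ℝ) T) :=
    hF.continuous.comp_continuousOn hucont
  obtain ⟨CF, hCF⟩ := isCompact_Icc.exists_bound_of_continuousOn hFuc
  have hFu2 : MemLp (fun t => F (u t)) 2 μ :=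
    MemLp.of_bound (hFuc.aestronglyMeasurable measurableSet_Icc) CF
      (hae.mono fun t ht => hCF t ht)
  set r := fun t => u' t - F (u t) - f t with hrdef
  have hr2 : MemLp r 2 μ := (hu'2.sub hFu2).sub hf
  set w := fun t => fderiv ℝ F (u t) (v t) with hwdef
  have hwc : ContinuousOn w (Icc (0:ℝ) T) := (hDF.comp_continuousOn hucont).clm_apply hvcont
  have hwm : AEStronglyMeasurable w μ := hwc.aestronglyMeasurable measurableSet_Icc
  have hwb : ∀ t ∈ Icc (0:ℝ) T, ‖w t‖ ≤ M1 * (𝔠 * N) := fun t ht =>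
    le_trans ((fderiv ℝ F (u t)).le_opNorm (v t))
      (mul_le_mul (hM1 t ht) (hvC t ht) (norm_nonneg _) hM1n)
  have hw2 : MemLp w 2 μ := MemLp.of_bound hwm _ (hae.mono fun t ht => hwb t ht)
  -- L2 norms
  have hLv : L2norm T v ≤ 𝔠t * N := hct.1 v v' hv
  have hLvdef : L2norm T v = Real.sqrt (∫ t, ‖v t‖ ^ 2 ∂μ) := by unfold L2norm; rw [hInt]
  have hLvn : 0 ≤ L2norm T v := Real.sqrt_nonneg _
  set R := L2norm T r with hRdef2
  have hRn : 0 ≤ R := Real.sqrt_nonneg _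
  have hRdef : R = Real.sqrt (∫ t, ‖r t‖ ^ 2 ∂μ) := by
    rw [hRdef2]; unfold L2norm; rw [hInt]
  -- integrability of the various products
  have hv'i : Integrable (fun t => ‖v' t‖) μ := (hv'2.integrable one_le_two).norm
  have hri : Integrable (fun t => ‖r t‖) μ := (hr2.integrable one_le_two).norm
  have hvv' : Integrable (fun t => ‖v' t‖ * ‖v t‖) μ := by
    refine Integrable.mono' (hv'i.const_mul (𝔠 * N)) (hv'2.1.norm.mul hvm.norm) ?_
    filter_upwards [hae] with t ht
    rw [Real.norm_of_nonneg (by positivity)]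
    calc ‖v' t‖ * ‖v t‖ ≤ ‖v' t‖ * (𝔠 * N) :=
          mul_le_mul_of_nonneg_left (hvC t ht) (norm_nonneg _)
      _ = 𝔠 * N * ‖v' t‖ := by ring
  have hvr : Integrable (fun t => ‖v t‖ * ‖r t‖) μ := by
    refine Integrable.mono' (hri.const_mul (𝔠 * N)) (hvm.norm.mul hr2.1.norm) ?_
    filter_upwards [hae] with t ht
    rw [Real.norm_of_nonneg (by positivity)]
    exact mul_le_mul_of_nonneg_right (hvC t ht) (norm_nonneg _)
  have hv'w : Integrable (fun t => ⟪v' t, w t⟫) μ := by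
    refine Integrable.mono' (hv'i.const_mul (M1 * (𝔠 * N))) (hv'2.1.inner hwm) ?_
    filter_upwards [hae] with t ht
    calc ‖⟪v' t, w t⟫‖ ≤ ‖v' t‖ * ‖w t‖ := norm_inner_le_norm _ _
      _ ≤ ‖v' t‖ * (M1 * (𝔠 * N)) :=
          mul_le_mul_of_nonneg_left (hwb t ht) (norm_nonneg _)
      _ = M1 * (𝔠 * N) * ‖v' t‖ := by ring
  have hHc : ContinuousOn (fun t => fderiv ℝ (fderiv ℝ F) (u t) (v t) (v t)) (Icc (0:ℝ) T) :=
    ((hD2F.comp_continuousOn hucont).clm_apply hvcont).clm_apply hvcont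
  have hHb : ∀ t ∈ Icc (0:ℝ) T,
      ‖fderiv ℝ (fderiv ℝ F) (u t) (v t) (v t)‖ ≤ M2 * (𝔠 * N) * ‖v t‖ := by
    intro t ht
    calc ‖fderiv ℝ (fderiv ℝ F) (u t) (v t) (v t)‖
        ≤ ‖fderiv ℝ (fderiv ℝ F) (u t) (v t)‖ * ‖v t‖ := ContinuousLinearMap.le_opNorm _ _
      _ ≤ ‖fderiv ℝ (fderiv ℝ F) (u t)‖ * ‖v t‖ * ‖v t‖ :=
          mul_le_mul_of_nonneg_right (ContinuousLinearMap.le_opNorm _ _) (norm_nonneg _)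
      _ ≤ M2 * (𝔠 * N) * ‖v t‖ := by
          have h1 := hM2 t ht
          have h2 := hvC t ht
          have h3 : (0:ℝ) ≤ ‖v t‖ := norm_nonneg _
          exact mul_le_mul (mul_le_mul h1 h2 h3 hM2n) le_rfl h3 (mul_nonneg hM2n hCn)
  have hAint : Integrable (fun t => ⟪-(fderiv ℝ (fderiv ℝ F) (u t) (v t) (v t)), r t⟫) μ := by
    refine Integrable.mono' (hri.const_mul (M2 * (𝔠 * N) * (𝔠 * N)))
      ((hHc.aestronglyMeasurable measurableSet_Icc).neg.inner hr2.1) ?_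
    filter_upwards [hae] with t ht
    calc ‖⟪-(fderiv ℝ (fderiv ℝ F) (u t) (v t) (v t)), r t⟫‖
        ≤ ‖-(fderiv ℝ (fderiv ℝ F) (u t) (v t) (v t))‖ * ‖r t‖ := norm_inner_le_norm _ _
      _ = ‖fderiv ℝ (fderiv ℝ F) (u t) (v t) (v t)‖ * ‖r t‖ := by rw [norm_neg]
      _ ≤ M2 * (𝔠 * N) * (𝔠 * N) * ‖r t‖ := by
          have h1 := hHb t ht
          have h2 := hvC t ht
          have h3 : (0:ℝ) ≤ ‖r t‖ := norm_nonneg _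
          exact mul_le_mul_of_nonneg_right
            (h1.trans (mul_le_mul_of_nonneg_left h2 (mul_nonneg hM2n hCn))) h3
  -- Cauchy-Schwarz
  have hCS1 : ∫ t, ‖v' t‖ * ‖v t‖ ∂μ ≤ Real.sqrt (∫ t, ‖v' t‖ ^ 2 ∂μ) * L2norm T v := by
    rw [hLvdef]; exact cs_aux hv'2 hv2
  have hCS2 : ∫ t, ‖v t‖ * ‖r t‖ ∂μ ≤ L2norm T v * R := by
    rw [hLvdef, hRdef]; exact cs_aux hv2 hr2
  -- bound on the cross term
  have hIP : ∫ t, ⟪v' t, w t⟫ ∂μ ≤ M1 * ∫ t, ‖v' t‖ * ‖v t‖ ∂μ := by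
    rw [← MeasureTheory.integral_const_mul]
    refine integral_mono_ae hv'w (hvv'.const_mul M1) ?_
    filter_upwards [hae] with t ht
    calc ⟪v' t, w t⟫ ≤ ‖v' t‖ * ‖w t‖ := real_inner_le_norm _ _
      _ ≤ ‖v' t‖ * (M1 * ‖v t‖) :=
          mul_le_mul_of_nonneg_left
            (le_trans ((fderiv ℝ F (u t)).le_opNorm (v t))
              (mul_le_mul_of_nonneg_right (hM1 t ht) (norm_nonneg _)))
            (norm_nonneg _)
      _ = M1 * (‖v' t‖ * ‖v t‖) := by ring
  -- lower bound on the second-derivative term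
  have hA : -(M2 * (𝔠 * N) * ∫ t, ‖v t‖ * ‖r t‖ ∂μ)
      ≤ ∫ t, ⟪-(fderiv ℝ (fderiv ℝ F) (u t) (v t) (v t)), r t⟫ ∂μ := by
    rw [← MeasureTheory.integral_const_mul, ← integral_neg]
    refine integral_mono_ae ((hvr.const_mul _).neg) hAint ?_
    filter_upwards [hae] with t ht
    rw [inner_neg_left]
    refine neg_le_neg ?_
    calc ⟪fderiv ℝ (fderiv ℝ F) (u t) (v t) (v t), r t⟫
        ≤ ‖fderiv ℝ (fderiv ℝ F) (u t) (v t) (v t)‖ * ‖r t‖ := real_inner_le_norm _ _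
      _ ≤ M2 * (𝔠 * N) * ‖v t‖ * ‖r t‖ :=
          mul_le_mul_of_nonneg_right (hHb t ht) (norm_nonneg _)
      _ = M2 * (𝔠 * N) * (‖v t‖ * ‖r t‖) := by ring
  -- lower bound on the quadratic term
  have hBker : (∫ t, ‖v' t‖ ^ 2 ∂μ) - 2 * ∫ t, ⟪v' t, w t⟫ ∂μ
      ≤ ∫ t, ‖v' t - w t‖ ^ 2 ∂μ := by
    have hint1 : Integrable (fun t => ‖v' t‖ ^ 2) μ :=
      (memLp_two_iff_integrable_sq_norm hv'2.1).mp hv'2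
    have hv'w2 : MemLp (fun t => v' t - w t) 2 μ := hv'2.sub hw2
    have hint3 : Integrable (fun t => ‖v' t - w t‖ ^ 2) μ :=
      (memLp_two_iff_integrable_sq_norm hv'w2.1).mp hv'w2
    have hint2 : Integrable (fun t => ‖v' t‖ ^ 2 - 2 * ⟪v' t, w t⟫) μ :=
      hint1.sub (hv'w.const_mul 2)
    have step : ∫ t, (‖v' t‖ ^ 2 - 2 * ⟪v' t, w t⟫) ∂μ ≤ ∫ t, ‖v' t - w t‖ ^ 2 ∂μ := by
      refine integral_mono hint2 hint3 fun t => ?_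
      rw [norm_sub_sq_real (v' t) (w t)]
      exact le_add_of_nonneg_right (sq_nonneg _)
    rw [integral_sub hint1 (hv'w.const_mul 2), MeasureTheory.integral_const_mul] at step
    exact step
  -- assemble
  rw [hInt, hInt]
  have e1 : Real.sqrt (∫ t, ‖v' t‖ ^ 2 ∂μ) * L2norm T v ≤ N * (𝔠t * N) :=
    mul_le_mul hsv' hLv hLvn hNn
  have e2 : M1 * (∫ t, ‖v' t‖ * ‖v t‖ ∂μ) ≤ M1 * (N * (𝔠t * N)) :=
    mul_le_mul_of_nonneg_left (hCS1.trans e1) hM1n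
  have e3 : L2norm T v * R ≤ 𝔠t * N * R := mul_le_mul_of_nonneg_right hLv hRn
  have e4 : M2 * (𝔠 * N) * (∫ t, ‖v t‖ * ‖r t‖ ∂μ) ≤ M2 * (𝔠 * N) * (𝔠t * N * R) :=
    mul_le_mul_of_nonneg_left (hCS2.trans e3) (mul_nonneg hM2n hCn)
  have q1 : N ^ 2 * (2 * 𝔠t * M1) = 2 * (M1 * (N * (𝔠t * N))) := by ring
  have q2 : N ^ 2 * (𝔠 * 𝔠t * M2 * R) = M2 * (𝔠 * N) * (𝔠t * N * R) := by ring
  have hIP2 := hIP.trans e2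
  have hA2 := le_trans (neg_le_neg e4) hA
  linarith [hBker, hNsq, hIP2, hA2]
end
end
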